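/- arXiv:1701.07075 — 2 statements merged into one kernel-verified Lean document; each statement's English description precedes it below -/
import Mathlib

section
/- Let b_1,...,b_n be i.i.d. uniform random variables over F_q and c = A·b with A invertible over F_q. If every k×k minor of A taken from rows p+1,...,p+k and any k columns is nonsingular, then for any m ≤ n−k, the conditional entropy H(b^(m) | c_{p+1:p+k}) = m·log q, where b^(m) is any m components of b. -/
/-- Probability of an event under the uniform distribution on a finite type `Ω`. -/
noncomputable def pr {Ω : Type*} [Fintype Ω] (p : Ω → Prop) : ℝ :=
  (Nat.card {ω // p ω} : ℝ) / (Fintype.card Ω : ℝ)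

/-- Shannon entropy (natural log) of a random variable `X` on a uniform finite sample space. -/
noncomputable def entropy {Ω α : Type*} [Fintype Ω] [Fintype α] (X : Ω → α) : ℝ :=
  ∑ a : α, Real.negMulLog (pr fun ω => X ω = a)

/-- Conditional entropy `H(X | Y) = H(X, Y) − H(Y)`. -/
noncomputable def condEntropy {Ω α β : Type*} [Fintype Ω] [Fintype α] [Fintype β]
    (X : Ω → α) (Y : Ω → β) : ℝ :=
  entropy (fun ω => (X ω, Y ω)) - entropy Y

/-- Mutual information `I(X; Y) = H(X) + H(Y) − H(X, Y)`. -/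
noncomputable def mutualInfo {Ω α β : Type*} [Fintype Ω] [Fintype α] [Fintype β]
    (X : Ω → α) (Y : Ω → β) : ℝ :=
  entropy X + entropy Y - entropy (fun ω => (X ω, Y ω))

lemma fiber_card {Ω α : Type*} [AddGroup Ω] [AddGroup α] [Fintype Ω] [Fintype α]
    (f : Ω →+ α) (hf : Function.Surjective f) (a : α) :
    Nat.card {ω // f ω = a} * Fintype.card α = Fintype.card Ω := by
  have key : ∀ b : α, Nat.card {ω // f ω = b} = Nat.card {ω // f ω = (0:α)} := by
    intro b
    obtain ⟨ω₀, hω₀⟩ := hf b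
    refine Nat.card_congr ⟨fun x => ⟨x.1 - ω₀, by simp [x.2, hω₀]⟩,
      fun x => ⟨x.1 + ω₀, by simp [x.2, hω₀]⟩, fun x => by simp, fun x => by simp⟩
  have : (Fintype.card Ω : ℕ) = ∑ b : α, Nat.card {ω // f ω = b} := by
    classical
    rw [Fintype.card_congr (Equiv.sigmaFiberEquiv f).symm, Fintype.card_sigma]
    exact Finset.sum_congr rfl fun b _ => (Nat.card_eq_fintype_card).symm
  rw [this]
  rw [Finset.sum_congr rfl (fun b _ => key b), Finset.sum_const, key a]
  simp [mul_comm]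

lemma entropy_addHom {Ω α : Type*} [AddGroup Ω] [AddGroup α] [Fintype Ω] [Fintype α]
    (f : Ω →+ α) (hf : Function.Surjective f) :
    entropy (⇑f) = Real.log (Fintype.card α) := by
  have hα : (0:ℝ) < Fintype.card α := by positivity
  have hΩ : (0:ℝ) < Fintype.card Ω := by positivity
  have hpr : ∀ a : α, pr (fun ω => f ω = a) = (Fintype.card α : ℝ)⁻¹ := by
    intro a
    have h1 := fiber_card f hf a
    unfold pr
    have h2 : (Nat.card {ω // f ω = a} : ℝ) * (Fintype.card α : ℝ) = (Fintype.card Ω : ℝ) := by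
      exact_mod_cast congrArg (Nat.cast : ℕ → ℝ) h1
    field_simp
    linarith [h2]
  unfold entropy
  simp only [hpr]
  rw [Finset.sum_const, Finset.card_univ, nsmul_eq_mul]
  rw [Real.negMulLog, Real.log_inv]
  field_simp


/-- Let `b_1,...,b_n` be i.i.d. uniform over `F_q` (i.e., `b` uniform on `F_q^n`) and
`c = A·b` with `A` invertible over `F_q`.  If every k×k minor of `A` taken from rows
`p+1,...,p+k` and any `k` columns is nonsingular, then for any `m ≤ n − k` the conditional
entropy `H(b^(m) | c_{p+1:p+k}) = m·log q`, where `b^(m)` is any `m` components of `b`. -/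
theorem condEntropy_eq_of_minors_invertible {F : Type*} [Field F] [Fintype F]
    {n k p m : ℕ} (hpk : p + k ≤ n) (hm : m ≤ n - k)
    (A : Matrix (Fin n) (Fin n) F) (hA : IsUnit A)
    (hminor : ∀ J : Fin k → Fin n, Function.Injective J →
      IsUnit (Matrix.of fun i j : Fin k => A ⟨p + i, by have := i.isLt; omega⟩ (J j)))
    (sel : Fin m → Fin n) (hsel : Function.Injective sel) :
    condEntropy (fun b : Fin n → F => fun i : Fin m => b (sel i))
        (fun b : Fin n → F => fun i : Fin k =>
          A.mulVec b ⟨p + i, by have := i.isLt; omega⟩)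
      = m * Real.log (Fintype.card F) := by
  classical
  -- the joint additive homomorphism
  set h : (Fin n → F) →+ (Fin m → F) × (Fin k → F) :=
    { toFun := fun b => (fun i => b (sel i), fun i : Fin k =>
        A.mulVec b ⟨p + i, by have := i.isLt; omega⟩)
      map_zero' := by ext i <;> simp [Matrix.mulVec_zero]
      map_add' := fun x y => by ext i <;> simp [Matrix.mulVec_add] } with hh
  set g : (Fin n → F) →+ (Fin k → F) :=
    { toFun := fun b => fun i : Fin k =>
        A.mulVec b ⟨p + i, by have := i.isLt; omega⟩
      map_zero' := by ext i; simp [Matrix.mulVec_zero]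
      map_add' := fun x y => by ext i; simp [Matrix.mulVec_add] } with hg
  -- choose k columns outside the range of sel
  have hcardT : k ≤ (Finset.univ \ Finset.image sel Finset.univ : Finset (Fin n)).card := by
    rw [Finset.card_sdiff_of_subset (Finset.subset_univ _), Finset.card_univ,
      Finset.card_image_of_injective _ hsel]
    simp only [Fintype.card_fin, Finset.card_univ]
    omega
  obtain ⟨T', hT'sub, hT'card⟩ := Finset.exists_subset_card_eq hcardT
  set J : Fin k → Fin n := fun j => (T'.orderIsoOfFin hT'card j : Fin n) with hJdef
  have hJinj : Function.Injective J :=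
    Subtype.val_injective.comp (T'.orderIsoOfFin hT'card).injective
  have hJnotsel : ∀ j, J j ∉ Finset.image sel Finset.univ := by
    intro j hmem
    have : J j ∈ (Finset.univ \ Finset.image sel Finset.univ : Finset (Fin n)) :=
      hT'sub (T'.orderIsoOfFin hT'card j).2
    exact (Finset.mem_sdiff.mp this).2 hmem
  set M : Matrix (Fin k) (Fin k) F :=
    Matrix.of fun i j : Fin k => A ⟨p + i, by have := i.isLt; omega⟩ (J j) with hM
  have hMunit : IsUnit M := hminor J hJinj
  have hMsurj : Function.Surjective M.mulVec := by
    intro r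
    obtain ⟨u, hu⟩ := hMunit
    refine ⟨(↑u⁻¹ : Matrix (Fin k) (Fin k) F).mulVec r, ?_⟩
    rw [Matrix.mulVec_mulVec, ← hu, u.mul_inv, Matrix.one_mulVec]
  -- surjectivity of the joint map
  have hsurj : Function.Surjective h := by
    rintro ⟨x, y⟩
    set b₀ : Fin n → F := Function.extend sel x 0 with hb₀
    obtain ⟨t, ht⟩ := hMsurj (fun i => y i - A.mulVec b₀ ⟨p + i, by have := i.isLt; omega⟩)
    set b₁ : Fin n → F := Function.extend J t 0 with hb₁
    have hext : ∀ (r : Fin n), ∑ j, A r j * b₁ j = ∑ j' : Fin k, A r (J j') * t j' := by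
      intro r
      have h0 : ∀ x_1 ∈ (Finset.univ : Finset (Fin n)), x_1 ∉ Finset.univ.image J →
          A r x_1 * b₁ x_1 = 0 := by
        intro z _ hz
        have : ¬∃ a, J a = z := by
          intro ⟨a, ha⟩; exact hz (Finset.mem_image.mpr ⟨a, Finset.mem_univ a, ha⟩)
        simp [hb₁, Function.extend_apply' _ _ _ this]
      calc ∑ j, A r j * b₁ j
          = ∑ j ∈ Finset.univ.image J, A r j * b₁ j :=
            (Finset.sum_subset (Finset.subset_univ _) h0).symm
        _ = ∑ j' : Fin k, A r (J j') * b₁ (J j') :=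
            Finset.sum_image (fun a _ b _ hab => hJinj hab)
        _ = ∑ j' : Fin k, A r (J j') * t j' := by
            simp [hb₁, hJinj.extend_apply]
    refine ⟨b₀ + b₁, ?_⟩
    have hXb : (fun i => (b₀ + b₁) (sel i)) = x := by
      funext i
      have hnot : ¬∃ a, J a = sel i := by
        rintro ⟨a, ha⟩
        exact hJnotsel a (ha ▸ Finset.mem_image.mpr ⟨i, Finset.mem_univ i, rfl⟩)
      simp [hb₀, hb₁, hsel.extend_apply, Function.extend_apply' _ _ _ hnot]
    have hYb : (fun i : Fin k =>
        A.mulVec (b₀ + b₁) ⟨p + i, by have := i.isLt; omega⟩) = y := by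
      funext i
      rw [Matrix.mulVec_add]
      have hmv : A.mulVec b₁ ⟨p + i, by have := i.isLt; omega⟩ =
          M.mulVec t i := by
        simp only [Matrix.mulVec, dotProduct, hM, Matrix.of_apply]
        exact hext _
      have := congrFun ht i
      simp only [Pi.add_apply, hmv, this]
      ring
    exact Prod.ext (by exact hXb) (by exact hYb)
  have hgsurj : Function.Surjective g := by
    intro y
    obtain ⟨b, hb⟩ := hsurj (0, y)
    exact ⟨b, congrArg Prod.snd hb⟩
  have e1 : entropy (fun b : Fin n → F =>
      ((fun i : Fin m => b (sel i)), (fun i : Fin k =>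
        A.mulVec b ⟨p + i, by have := i.isLt; omega⟩)))
      = Real.log (Fintype.card ((Fin m → F) × (Fin k → F))) := entropy_addHom h hsurj
  have e2 : entropy (fun b : Fin n → F => fun i : Fin k =>
      A.mulVec b ⟨p + i, by have := i.isLt; omega⟩)
      = Real.log (Fintype.card (Fin k → F)) := entropy_addHom g hgsurj
  unfold condEntropy
  rw [e1, e2]
  have hq : (0:ℝ) < Fintype.card F := by positivity
  rw [Fintype.card_prod]
  simp only [Fintype.card_fun, Fintype.card_fin]
  push_cast
  rw [Real.log_mul (pow_ne_zero _ hq.ne') (pow_ne_zero _ hq.ne'), Real.log_pow,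
    Real.log_pow]
  ring
end

section
/- With k = n/2 and m ≤ n/2, the mutual information between any m components of the source vector b (uniform i.i.d. over F_q) and the k contiguous coded components c_{p+1:p+k} of c = A·b is zero, where A is n×n invertible with all relevant k×(n−m) row-submatrices of full rank k. -/

private lemma pr_fiber_hom {Ω α : Type*} [Fintype Ω] [Fintype α] [AddCommGroup Ω] [AddCommGroup α]
    (f : Ω →+ α) (hf : Function.Surjective f) (a : α) :
    pr (fun ω => f ω = a) = (Fintype.card α : ℝ)⁻¹ := by
  obtain ⟨ω0, hω0⟩ := hf a
  have e : {ω // f ω = a} ≃ f.ker :=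
    { toFun := fun ω => ⟨ω.1 - ω0, by
        simp [AddMonoidHom.mem_ker, map_sub, ω.2, hω0]⟩
      invFun := fun x => ⟨x.1 + ω0, by
        have hx := x.2
        rw [AddMonoidHom.mem_ker] at hx
        simp [map_add, hx, hω0]⟩
      left_inv := fun ω => by simp
      right_inv := fun x => by simp }
  have hcard : Nat.card {ω // f ω = a} = Nat.card f.ker := Nat.card_congr e
  have hquot : Nat.card (Ω ⧸ f.ker) = Nat.card α :=
    Nat.card_congr (QuotientAddGroup.quotientKerEquivOfSurjective f hf).toEquiv
  have htot : Nat.card (Ω ⧸ f.ker) * Nat.card f.ker = Nat.card Ω :=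
    (AddSubgroup.card_eq_card_quotient_mul_card_addSubgroup f.ker).symm
  have hker_pos : (0:ℝ) < (Nat.card f.ker : ℝ) := by
    exact_mod_cast Nat.card_pos
  have hα_pos : (0:ℝ) < (Fintype.card α : ℝ) := by exact_mod_cast Fintype.card_pos
  have hΩ : (Fintype.card Ω : ℝ) = (Fintype.card α : ℝ) * (Nat.card f.ker : ℝ) := by
    rw [Fintype.card_eq_nat_card (α := Ω), ← htot, hquot, Fintype.card_eq_nat_card (α := α)]
    push_cast; ring
  unfold pr
  rw [hcard, hΩ]
  rw [eq_comm, inv_eq_iff_eq_inv, eq_comm, inv_div]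
  rw [mul_div_assoc, div_self hker_pos.ne', mul_one]

private lemma entropy_hom' {Ω α : Type*} [Fintype Ω] [Fintype α] [AddCommGroup Ω] [AddCommGroup α]
    (f : Ω →+ α) (hf : Function.Surjective f) :
    entropy (fun ω => f ω) = Real.log (Fintype.card α) := by
  have hα_pos : (0:ℝ) < (Fintype.card α : ℝ) := by exact_mod_cast Fintype.card_pos
  unfold entropy
  have : ∀ a : α, Real.negMulLog (pr fun ω => f ω = a)
      = (Fintype.card α : ℝ)⁻¹ * Real.log (Fintype.card α) := by
    intro a
    rw [pr_fiber_hom f hf a, Real.negMulLog, Real.log_inv]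
    ring
  rw [Finset.sum_congr rfl (fun a _ => this a), Finset.sum_const, Finset.card_univ,
    nsmul_eq_mul]
  rw [← mul_assoc, mul_inv_cancel₀ hα_pos.ne', one_mul]

/-- With `k = n/2` and `m ≤ n/2`, the mutual information between any `m` components of the
source vector `b` (uniform i.i.d. over `F_q`) and the `k` contiguous coded components
`c_{p+1:p+k}` of `c = A·b` is zero, where `A` is n×n invertible such that every k×(n−m)
submatrix obtained from the `k` consecutive rows by deleting any `m` columns has full rank `k`. -/
theorem mutualInfo_coded_block_zero {F : Type*} [Field F] [Fintype F]
    {n k p m : ℕ} (hk : 2 * k = n) (hm : m ≤ k) (hpk : p + k ≤ n)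
    (A : Matrix (Fin n) (Fin n) F) (hA : IsUnit A)
    (hrank : ∀ T : Finset (Fin n), T.card = m →
      (A.submatrix (fun i : Fin k => (⟨p + i, by have := i.isLt; omega⟩ : Fin n))
        (fun j : {j // j ∈ (Tᶜ : Finset (Fin n))} => j.val)).rank = k)
    (sel : Fin m → Fin n) (hsel : Function.Injective sel) :
    mutualInfo
        (fun b : Fin n → F => fun i : Fin k =>
          A.mulVec b ⟨p + i, by have := i.isLt; omega⟩)
        (fun b : Fin n → F => fun i : Fin m => b (sel i)) = 0 := by
  classical
  set r : Fin k → Fin n := fun i => ⟨p + i, by have := i.isLt; omega⟩ with hr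
  -- joint additive hom
  set fJ : (Fin n → F) →+ (Fin k → F) × (Fin m → F) :=
    AddMonoidHom.mk' (fun b => (fun i => A.mulVec b (r i), fun i => b (sel i)))
      (by
        intro b c
        refine Prod.ext ?_ ?_ <;> funext i <;>
          simp [Matrix.mulVec_add]) with hfJ
  -- joint surjectivity
  have hsurj : Function.Surjective fJ := by
    rintro ⟨x, y⟩
    set T : Finset (Fin n) := Finset.univ.image sel with hTdef
    have hT : T.card = m := by
      rw [hTdef, Finset.card_image_of_injective _ hsel, Finset.card_univ, Fintype.card_fin]
    set M := A.submatrix r (fun j : {j // j ∈ (Tᶜ : Finset (Fin n))} => j.val) with hM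
    have hMsurj : Function.Surjective M.mulVecLin := by
      rw [← LinearMap.range_eq_top]
      apply Submodule.eq_top_of_finrank_eq
      rw [← Matrix.rank, hrank T hT, Module.finrank_pi, Fintype.card_fin]
    -- b0 carries the y-values
    set b0 : Fin n → F := fun j => if h : ∃ i, sel i = j then y h.choose else 0 with hb0
    have hb0sel : ∀ i, b0 (sel i) = y i := by
      intro i
      have h : ∃ i', sel i' = sel i := ⟨i, rfl⟩
      rw [hb0]
      simp only [dif_pos h]
      congr 1
      exact hsel h.choose_spec
    obtain ⟨c, hc⟩ := hMsurj (fun i => x i - A.mulVec b0 (r i))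
    rw [Matrix.mulVecLin_apply] at hc
    set b1 : Fin n → F := fun j => if h : j ∈ (Tᶜ : Finset (Fin n)) then c ⟨j, h⟩ else 0 with hb1
    refine ⟨b0 + b1, ?_⟩
    have hrow : ∀ i : Fin k, A.mulVec b1 (r i) = x i - A.mulVec b0 (r i) := by
      intro i
      have key : A.mulVec b1 (r i) = M.mulVec c i := by
        rw [Matrix.mulVec, Matrix.mulVec, dotProduct, dotProduct]
        calc ∑ j : Fin n, A (r i) j * b1 j
            = ∑ j ∈ (Tᶜ : Finset (Fin n)), A (r i) j * b1 j :=
              (Finset.sum_subset (Finset.subset_univ _) (by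
                intro j _ hj
                rw [hb1]; simp [hj])).symm
          _ = ∑ j : {j // j ∈ (Tᶜ : Finset (Fin n))}, A (r i) j.val * b1 j.val :=
              Finset.sum_subtype _ (fun j => Iff.rfl) _
          _ = ∑ j : {j // j ∈ (Tᶜ : Finset (Fin n))}, M i j * c j := by
              refine Finset.sum_congr rfl (fun j _ => ?_)
              rw [hb1, hM]
              simp [Matrix.submatrix_apply]
      rw [key]
      exact congrFun hc i
    have hY : ∀ i : Fin m, (b0 + b1) (sel i) = y i := by
      intro i
      have hmem : sel i ∈ T := by rw [hTdef]; exact Finset.mem_image_of_mem sel (Finset.mem_univ i)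
      have : b1 (sel i) = 0 := by
        rw [hb1]; simp [Finset.mem_compl, hmem]
      simp [this, hb0sel i]
    refine Prod.ext ?_ ?_
    · funext i
      show A.mulVec (b0 + b1) (r i) = x i
      rw [Matrix.mulVec_add]
      simp only [Pi.add_apply]
      rw [hrow i]; ring
    · funext i; exact hY i
  -- the two marginals
  have hX : Function.Surjective ((AddMonoidHom.fst (Fin k → F) (Fin m → F)).comp fJ) :=
    (Prod.fst_surjective).comp hsurj
  have hY : Function.Surjective ((AddMonoidHom.snd (Fin k → F) (Fin m → F)).comp fJ) :=
    (Prod.snd_surjective).comp hsurj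
  have e1 : entropy (fun b : Fin n → F => fun i : Fin k => A.mulVec b (r i))
      = Real.log (Fintype.card (Fin k → F)) :=
    entropy_hom' ((AddMonoidHom.fst (Fin k → F) (Fin m → F)).comp fJ) hX
  have e2 : entropy (fun b : Fin n → F => fun i : Fin m => b (sel i))
      = Real.log (Fintype.card (Fin m → F)) :=
    entropy_hom' ((AddMonoidHom.snd (Fin k → F) (Fin m → F)).comp fJ) hY
  have e3 : entropy (fun b : Fin n → F =>
      ((fun i : Fin k => A.mulVec b (r i)), (fun i : Fin m => b (sel i))))
      = Real.log (Fintype.card ((Fin k → F) × (Fin m → F))) :=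
    entropy_hom' fJ hsurj
  unfold mutualInfo
  rw [show (fun b : Fin n → F => fun i : Fin k =>
        A.mulVec b ⟨p + i, by have := i.isLt; omega⟩) =
      (fun b : Fin n → F => fun i : Fin k => A.mulVec b (r i)) from rfl]
  rw [e1, e2, e3, Fintype.card_prod, Nat.cast_mul, Real.log_mul (by positivity) (by positivity)]
  ring
end
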